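/- arXiv:2003.09505 — 3 statements merged into one kernel-verified Lean document; each statement's English description precedes it below -/
import Mathlib

section
/- Let n ≥ 1, let p : {1,…,n} → (0,1] be a probability profile with p_i > 0 for all i, and let D be a target with D ≥ 1/2 and ∑_{i=1}^{n} p_i > D − 1/2. Then there exists an optimal subset S* ⊆ {1,…,n} such that for every i ∉ S* and every j ∈ S*, p_i ≤ p_j (i.e., S* contains all arms whose parameter exceeds the smallest parameter occurring in S*). -/
/-!
Among the optimal subsets take one, `S`, of largest total weight. Adding an arm `i` to a set `T`
changes the loss by `p_i (2 (∑_T p - D) + 1)`. If `j ∈ S`, optimality of `S` against `S \ {j}`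
and `p_j > 0` make `2 (∑_{S \ {j}} p - D) + 1 ≤ 0`, so replacing `j` by an arm `i ∉ S` with
`p_i > p_j` does not increase the loss, while it increases the total weight: impossible.
-/

open Finset

/-- Expected loss `f_{p,D}(S) = (∑_{i∈S} p_i − D)² + ∑_{i∈S} p_i(1 − p_i)`. -/
noncomputable def expLoss {n : ℕ} (p : Fin n → ℝ) (D : ℝ) (S : Finset (Fin n)) : ℝ :=
  (∑ i ∈ S, p i - D) ^ 2 + ∑ i ∈ S, p i * (1 - p i)

theorem Finite.exists_min_lex_max {α β γ : Type*} [Finite α] [Nonempty α] [LinearOrder β]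
    [LinearOrder γ] (f : α → β) (g : α → γ) :
    ∃ a, (∀ b, f a ≤ f b) ∧ ∀ b, f b ≤ f a → g b ≤ g a := by
  obtain ⟨a, ha⟩ := Finite.exists_min fun a => toLex (f a, OrderDual.toDual (g a))
  refine ⟨a, fun b => ?_, fun b hb => ?_⟩
  · rcases Prod.Lex.le_iff.mp (ha b) with h | h
    exacts [h.le, h.1.le]
  · rcases Prod.Lex.le_iff.mp (ha b) with h | h
    exacts [absurd hb h.not_ge, h.2]

section

variable {n : ℕ} (p : Fin n → ℝ) (D : ℝ) {S : Finset (Fin n)} {i j : Fin n}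

theorem expLoss_insert (hi : i ∉ S) :
    expLoss p D (insert i S) = expLoss p D S + p i * (2 * (∑ k ∈ S, p k - D) + 1) := by
  simp only [expLoss, sum_insert hi]
  ring

theorem expLoss_erase (hj : j ∈ S) :
    expLoss p D S = expLoss p D (S.erase j) + p j * (2 * (∑ k ∈ S.erase j, p k - D) + 1) := by
  rw [← expLoss_insert p D (notMem_erase j S), insert_erase hj]

theorem expLoss_swap (hi : i ∉ S) (hj : j ∈ S) :
    expLoss p D (insert i (S.erase j)) =
      expLoss p D S + (p i - p j) * (2 * (∑ k ∈ S.erase j, p k - D) + 1) := by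
  rw [expLoss_insert p D fun h => hi (mem_of_mem_erase h), expLoss_erase p D hj]
  ring

end

theorem stmt_4_general {n : ℕ} (p : Fin n → ℝ)
    (hp : ∀ i, 0 < p i ∧ p i ≤ 1) (D : ℝ) :
    ∃ Sstar : Finset (Fin n),
      (∀ S : Finset (Fin n), expLoss p D Sstar ≤ expLoss p D S) ∧
      (∀ i ∉ Sstar, ∀ j ∈ Sstar, p i ≤ p j) := by
  obtain ⟨S, hopt, hmax⟩ := Finite.exists_min_lex_max (expLoss p D) fun S => ∑ k ∈ S, p k
  refine ⟨S, hopt, fun i hi j hj => ?_⟩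
  by_contra! hlt
  set c := 2 * (∑ k ∈ S.erase j, p k - D) + 1
  have hc : c ≤ 0 := by
    have h := hopt (S.erase j)
    rw [expLoss_erase p D hj] at h
    exact nonpos_of_mul_nonpos_right (by linarith) (hp j).1
  have hswap : expLoss p D (insert i (S.erase j)) ≤ expLoss p D S := by
    rw [expLoss_swap p D hi hj]
    exact add_le_of_nonpos_right (mul_nonpos_of_nonneg_of_nonpos (sub_nonneg.2 hlt.le) hc)
  have hsum := hmax _ hswap
  rw [sum_insert fun h => hi (mem_of_mem_erase h), ← add_sum_erase S p hj] at hsum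
  linarith

theorem stmt_4 {n : ℕ} (hn : 1 ≤ n) (p : Fin n → ℝ)
    (hp : ∀ i, 0 < p i ∧ p i ≤ 1) (D : ℝ) (hD : 1/2 ≤ D)
    (hsum : D - 1/2 < ∑ i, p i) :
    ∃ Sstar : Finset (Fin n),
      (∀ S : Finset (Fin n), expLoss p D Sstar ≤ expLoss p D S) ∧
      (∀ i ∉ Sstar, ∀ j ∈ Sstar, p i ≤ p j) :=
  stmt_4_general p hp D
end

section
/- Let m ≥ 0 and let p : {1,…,m+1} → [0,1] satisfy p_1 ≥ p_2 ≥ … ≥ p_{m+1}. Let D ∈ ℝ and let j, k be integers with 1 ≤ j ≤ k ≤ m+1. Define δ_x = ∑_{i=1}^{k} p_i − (D − 1/2) and δ_y = ∑_{i ∈ {1,…,m+1}∖{j}} p_i − (D − 1/2), and assume 0 < δ_x ≤ p_k and 0 ≤ δ_y ≤ p_{m+1}. Then f_{p,D}({1,…,k}) ≤ f_{p,D}({1,…,m+1} ∖ {j}). -/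
/-!
Writing `δ_S = ∑_{i∈S} p_i − (D − 1/2)`, the loss is `f(S) = δ_S² − ∑_{i∈S} p_i² + (D − 1/4)`.
The two sets differ by trading `p_j` for the tail `{k+1, …, m+1}`, so the claim becomes
`∑_{tail} p_i² + δ_x² ≤ p_j² + δ_y²`, where the two sides have equal sums. All terms on the
left are nonnegative and the tail contains `p_{m+1} ∈ [δ_y, p_j]`; pulling that term out,
`∑ t² ≤ (∑ t)²` for the others reduces everything to `x² + (a + b − x)² ≤ a² + b²` for
`x ∈ [b, a]`.
-/

open Finset

theorem expLoss_eq {n : ℕ} (p : Fin n → ℝ) (D : ℝ) (S : Finset (Fin n)) :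
    expLoss p D S = (∑ i ∈ S, p i - (D - 1/2)) ^ 2 - ∑ i ∈ S, p i ^ 2 + (D - 1/4) := by
  have hvar : ∑ i ∈ S, p i * (1 - p i) = ∑ i ∈ S, p i - ∑ i ∈ S, p i ^ 2 := by
    rw [← sum_sub_distrib]
    exact sum_congr rfl fun i _ => by ring
  rw [expLoss, hvar]
  ring

theorem sum_sq_add_sq_le_sq_add_sq {ι : Type*} [DecidableEq ι] {s : Finset ι} {t : ι → ℝ}
    (ht : ∀ i ∈ s, 0 ≤ t i) {i₀ : ι} (hi₀ : i₀ ∈ s) {a b y : ℝ} (hb : b ≤ t i₀)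
    (ha : t i₀ ≤ a) (hy : 0 ≤ y) (hsum : ∑ i ∈ s, t i + y = a + b) :
    ∑ i ∈ s, t i ^ 2 + y ^ 2 ≤ a ^ 2 + b ^ 2 := by
  set r := ∑ i ∈ s.erase i₀, t i
  have hr : 0 ≤ r := sum_nonneg fun i hi => ht i (mem_of_mem_erase hi)
  have hrest : ∑ i ∈ s.erase i₀, t i ^ 2 ≤ r ^ 2 :=
    sum_sq_le_sq_sum_of_nonneg fun i hi => ht i (mem_of_mem_erase hi)
  rw [← add_sum_erase s _ hi₀] at hsum ⊢
  nlinarith [mul_nonneg (sub_nonneg.2 hb) (sub_nonneg.2 ha), mul_nonneg hr hy]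

theorem sum_sq_tail_add_sq_le {m k : ℕ} {p : Fin (m + 1) → ℝ} (hp₀ : ∀ i, 0 ≤ p i)
    (hp : Antitone p) (hk : k ≤ m + 1) {i₀ : Fin (m + 1)} (hi₀ : (i₀ : ℕ) ≤ k) {x y : ℝ}
    (hx₀ : 0 ≤ x) (hx : x ≤ p i₀) (hy : y ≤ p (Fin.last m))
    (hsum : ∑ i ∈ univ.filter (fun i : Fin (m + 1) => ¬ (i : ℕ) < k), p i + x = p i₀ + y) :
    ∑ i ∈ univ.filter (fun i : Fin (m + 1) => ¬ (i : ℕ) < k), p i ^ 2 + x ^ 2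
      ≤ p i₀ ^ 2 + y ^ 2 := by
  rcases hk.lt_or_eq with hk | rfl
  · have hlast : Fin.last m ∈ univ.filter (fun i : Fin (m + 1) => ¬ (i : ℕ) < k) := by
      simp only [mem_filter, mem_univ, true_and, Fin.val_last]
      omega
    exact sum_sq_add_sq_le_sq_add_sq (fun i _ => hp₀ i) hlast hy
      (hp (Fin.le_last i₀)) hx₀ hsum
  · have htail : univ.filter (fun i : Fin (m + 1) => ¬ (i : ℕ) < m + 1) = ∅ :=
      filter_eq_empty_iff.2 fun i _ => not_not.2 i.isLt
    rw [htail, sum_empty] at hsum ⊢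
    nlinarith [hp₀ i₀]

theorem stmt_11 (m : ℕ) (p : Fin (m + 1) → ℝ)
    (hp : ∀ i, 0 ≤ p i ∧ p i ≤ 1)
    (hmono : ∀ i j : Fin (m + 1), i ≤ j → p j ≤ p i)
    (D : ℝ) (j k : ℕ) (hjk : j ≤ k) (hk : k ≤ m + 1)
    (δx δy : ℝ)
    (hδx : δx = ∑ i ∈ (Finset.univ.filter fun i : Fin (m + 1) => (i : ℕ) < k), p i
        - (D - 1/2))
    (hδy : δy = ∑ i ∈ Finset.univ.erase (⟨j - 1, by omega⟩ : Fin (m + 1)), p i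
        - (D - 1/2))
    (hδx_pos : 0 < δx) (hδx_le : δx ≤ p (⟨k - 1, by omega⟩ : Fin (m + 1)))
    (hδy_le : δy ≤ p (⟨m, by omega⟩ : Fin (m + 1))) :
    expLoss p D (Finset.univ.filter fun i : Fin (m + 1) => (i : ℕ) < k)
      ≤ expLoss p D (Finset.univ.erase (⟨j - 1, by omega⟩ : Fin (m + 1))) := by
  set jj : Fin (m + 1) := ⟨j - 1, by omega⟩
  have hsplit (g : Fin (m + 1) → ℝ) : ∑ i ∈ univ.erase jj, g i
      = ∑ i ∈ univ.filter (fun i : Fin (m + 1) => (i : ℕ) < k), g i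
        + ∑ i ∈ univ.filter (fun i : Fin (m + 1) => ¬ (i : ℕ) < k), g i - g jj := by
    rw [sum_erase_eq_sub (mem_univ jj), sum_filter_add_sum_filter_not]
  have hδx_le_pj : δx ≤ p jj := hδx_le.trans (hmono jj _ (Fin.mk_le_mk.2 (by omega)))
  have key := sum_sq_tail_add_sq_le (fun i => (hp i).1) hmono hk
    (i₀ := jj) (show j - 1 ≤ k by omega) hδx_pos.le hδx_le_pj hδy_le
    (by rw [hδy, hsplit, hδx]; ring)
  rw [expLoss_eq, expLoss_eq, ← hδx, ← hδy, hsplit fun i => p i ^ 2]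
  linarith
end

section
/- Let n ≥ 1, let p : {1,…,n} → [0,1] be a probability profile with a sorting permutation σ, let D ∈ ℝ, and let 1 ≤ l ≤ n. Then: (a) f_{p,D}({σ(1),…,σ(l−1)}) − f_{p,D}({σ(1),…,σ(l)}) = 2 p_{σ(l)} · ((D − 1/2) − ∑_{i=1}^{l−1} p_{σ(i)}); and (b) if l ≤ n − 1, then f_{p,D}({σ(1),…,σ(l+1)}) − f_{p,D}({σ(1),…,σ(l)}) = 2 p_{σ(l+1)} · (∑_{i=1}^{l} p_{σ(i)} − (D − 1/2)). -/
open Finset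

/-- The set `{σ(1),…,σ(k)}` (1-based), i.e. the image under `σ` of the first `k` indices. -/
def prefixSet {n : ℕ} (σ : Equiv.Perm (Fin n)) (k : ℕ) : Finset (Fin n) :=
  (Finset.univ.filter fun i : Fin n => (i : ℕ) < k).image σ

lemma expLoss_insert_sub {n : ℕ} (p : Fin n → ℝ) (D : ℝ) {S : Finset (Fin n)} {a : Fin n}
    (ha : a ∉ S) :
    expLoss p D (insert a S) - expLoss p D S = 2 * p a * (∑ i ∈ S, p i - (D - 1/2)) := by
  rw [expLoss, expLoss, sum_insert ha, sum_insert ha]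
  ring

lemma prefixSet_succ {n : ℕ} (σ : Equiv.Perm (Fin n)) {k : ℕ} (hk : k < n) :
    prefixSet σ (k + 1) = insert (σ ⟨k, hk⟩) (prefixSet σ k) := by
  ext x
  simp only [prefixSet, mem_image, mem_filter, mem_univ, true_and, mem_insert]
  constructor
  · rintro ⟨i, hi, rfl⟩
    rcases Nat.lt_succ_iff_lt_or_eq.mp hi with hlt | heq
    · exact Or.inr ⟨i, hlt, rfl⟩
    · exact Or.inl (congrArg σ (Fin.ext heq))
  · rintro (rfl | ⟨i, hi, rfl⟩)
    · exact ⟨⟨k, hk⟩, k.lt_succ_self, rfl⟩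
    · exact ⟨i, Nat.lt_succ_of_lt hi, rfl⟩

lemma apply_notMem_prefixSet {n : ℕ} (σ : Equiv.Perm (Fin n)) {k : ℕ} (hk : k < n) :
    σ ⟨k, hk⟩ ∉ prefixSet σ k := by
  simp only [prefixSet, mem_image, mem_filter, mem_univ, true_and, σ.injective.eq_iff]
  rintro ⟨i, hi, rfl⟩
  exact lt_irrefl k hi

lemma expLoss_prefixSet_succ_sub {n : ℕ} (p : Fin n → ℝ) (D : ℝ) (σ : Equiv.Perm (Fin n))
    {k : ℕ} (hk : k < n) :
    expLoss p D (prefixSet σ (k + 1)) - expLoss p D (prefixSet σ k)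
      = 2 * p (σ ⟨k, hk⟩) * (∑ i ∈ prefixSet σ k, p i - (D - 1/2)) := by
  rw [prefixSet_succ σ hk, expLoss_insert_sub p D (apply_notMem_prefixSet σ hk)]

theorem stmt_13 {n : ℕ} (p : Fin n → ℝ) (D : ℝ) (σ : Equiv.Perm (Fin n))
    (l : ℕ) (hl1 : 1 ≤ l) (hl2 : l ≤ n) :
    -- (a)
    (expLoss p D (prefixSet σ (l - 1)) - expLoss p D (prefixSet σ l)
      = 2 * p (σ ⟨l - 1, by omega⟩)
          * ((D - 1/2) - ∑ i ∈ prefixSet σ (l - 1), p i)) ∧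
    -- (b)
    (∀ hl3 : l ≤ n - 1,
      expLoss p D (prefixSet σ (l + 1)) - expLoss p D (prefixSet σ l)
        = 2 * p (σ ⟨l, by omega⟩)
            * (∑ i ∈ prefixSet σ l, p i - (D - 1/2))) := by
  refine ⟨?_, fun hl3 => expLoss_prefixSet_succ_sub p D σ (by omega)⟩
  obtain ⟨k, rfl⟩ : ∃ k, l = k + 1 := ⟨l - 1, by omega⟩
  have step := expLoss_prefixSet_succ_sub p D σ (k := k) (by omega)
  simp only [Nat.add_sub_cancel] at step ⊢
  linarith
end
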